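/- Let (A, m_A, 1_A, Δ_A) and (B, m_B, 1_B, Δ_B) be infinitesimal unitary bialgebras of weight λ, and define the k-linear map Δ : (A ⊗ B) → (A ⊗ B) ⊗ (A ⊗ B) by Δ(a ⊗ b) = Σ_{(a)} (a_(1) ⊗ 1_B) ⊗ (a_(2) ⊗ b) + Σ_{(b)} (a ⊗ b_(1)) ⊗ (1_A ⊗ b_(2)) + λ (a ⊗ 1_B) ⊗ (1_A ⊗ b), using the Sweedler notation Δ_A(a) = Σ_{(a)} a_(1) ⊗ a_(2) and Δ_B(b) = Σ_{(b)} b_(1) ⊗ b_(2). Then Δ is coassociative: (Δ ⊗ id) ∘ Δ = (id ⊗ Δ) ∘ Δ, so (A ⊗ B, Δ) is a (not necessarily counital) coalgebra. -/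

import Mathlib

/-!
Inside `A ⊗ B`, the coproduct `Δ` restricts to `Δ_A` on `A ⊗ 1` and to `Δ_B` on `1 ⊗ B`: the
extra terms cancel because the weight-`λ` Leibniz rule at `1 · 1` forces `Δ(1) = -λ (1 ⊗ 1)`.
Moreover `Δ` obeys the weight-`λ` Leibniz rule on the products `(a ⊗ 1)(1 ⊗ b) = a ⊗ b`.
Let `s`, `t` be coassociative, with the Leibniz rule holding for `s t`, `s t₁` and `s₂ t`
(Sweedler notation). Expanding both sides of coassociativity at `s t` by it gives matching terms:
those involving `(Δ ⊗ id) Δ` and `(id ⊗ Δ) Δ` at `s` or `t` agree by coassociativity, the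
`λ`-terms agree directly, and the mixed terms `Σ s₁ ⊗ s₂ t₁ ⊗ t₂` appear on both sides.
-/

open TensorProduct LinearMap

section Coassociativity

variable {k M N : Type*} [CommRing k] [AddCommGroup M] [Module k M] [AddCommGroup N] [Module k N]

def IsCoassocAt (Δ : M →ₗ[k] M ⊗[k] M) (x : M) : Prop :=
  TensorProduct.assoc k M M M (rTensor M Δ (Δ x)) = lTensor M Δ (Δ x)

theorem IsCoassocAt.map {δ : M →ₗ[k] M ⊗[k] M} {Δ : N →ₗ[k] N ⊗[k] N} {f : M →ₗ[k] N}
    (hf : ∀ m, Δ (f m) = TensorProduct.map f f (δ m)) {m : M} (hm : IsCoassocAt δ m) :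
    IsCoassocAt Δ (f m) := by
  have hcomp : Δ ∘ₗ f = TensorProduct.map f f ∘ₗ δ := LinearMap.ext hf
  calc TensorProduct.assoc k N N N (rTensor N Δ (Δ (f m)))
      = TensorProduct.assoc k N N N
          (TensorProduct.map (TensorProduct.map f f) f (rTensor M δ (δ m))) := by
        rw [hf, rTensor_map, hcomp, map_rTensor]
    _ = TensorProduct.map f (TensorProduct.map f f) (lTensor M δ (δ m)) := by
        rw [← map_map_assoc, hm]
    _ = lTensor N Δ (Δ (f m)) := by
        rw [hf, lTensor_map, hcomp, map_lTensor]

theorem lTensor_rTensor_comm {M' N' : Type*} [AddCommGroup M'] [Module k M'] [AddCommGroup N']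
    [Module k N'] (φ : N →ₗ[k] N') (ψ : M →ₗ[k] M') (w : M ⊗[k] N) :
    lTensor M' φ (rTensor N ψ w) = rTensor N' ψ (lTensor M φ w) := by
  rw [← LinearMap.comp_apply (lTensor M' φ), lTensor_comp_rTensor, ← rTensor_comp_lTensor,
    LinearMap.comp_apply]

theorem assoc_rTensor_lTensor (φ : M →ₗ[k] M ⊗[k] M) (ψ : M →ₗ[k] N) (w : M ⊗[k] M) :
    TensorProduct.assoc k M M N (rTensor N φ (lTensor M ψ w)) =
      lTensor M (lTensor M ψ) (TensorProduct.assoc k M M M (rTensor M φ w)) := by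
  rw [← lTensor_rTensor_comm, lTensor_tensor]
  simp

end Coassociativity

section Leibniz

variable {k M N C : Type*} [CommRing k] [AddCommGroup M] [Module k M] [AddCommGroup N] [Module k N]
  [Ring C] [Algebra k C]

def LeibnizAt (lam : k) (Δ : C →ₗ[k] C ⊗[k] C) (x y : C) : Prop :=
  Δ (x * y) = rTensor C (mulLeft k x) (Δ y) + lTensor C (mulRight k y) (Δ x) + lam • (x ⊗ₜ y)

theorem LeibnizAt.apply_one {lam : k} {Δ : C →ₗ[k] C ⊗[k] C} (h : LeibnizAt lam Δ 1 1) :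
    Δ 1 = -(lam • ((1 : C) ⊗ₜ[k] (1 : C))) := by
  rw [LeibnizAt, mul_one, mulLeft_one, mulRight_one, rTensor_id, lTensor_id, id_apply,
    add_assoc, left_eq_add] at h
  exact eq_neg_of_add_eq_zero_left h

variable (k C) in
noncomputable def mulMiddle : (C ⊗[k] C) ⊗[k] (C ⊗[k] C) →ₗ[k] C ⊗[k] (C ⊗[k] C) :=
  lTensor C (rTensor C (mul' k C) ∘ₗ (TensorProduct.assoc k C C C).symm.toLinearMap) ∘ₗ
    (TensorProduct.assoc k C C (C ⊗[k] C)).toLinearMap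

@[simp]
theorem mulMiddle_tmul (a b c d : C) :
    mulMiddle k C ((a ⊗ₜ b) ⊗ₜ (c ⊗ₜ d)) = a ⊗ₜ ((b * c) ⊗ₜ d) := rfl

theorem tmul_rTensor_mulLeft (a b : C) (v : C ⊗[k] C) :
    a ⊗ₜ rTensor C (mulLeft k b) v = mulMiddle k C ((a ⊗ₜ b) ⊗ₜ v) := by
  induction v using TensorProduct.induction_on with
  | zero => simp
  | tmul => simp
  | add u v hu hv => simp only [map_add, tmul_add, hu, hv]

theorem assoc_lTensor_mulRight_tmul (c : C) (u : C ⊗[k] C) (d : C) :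
    TensorProduct.assoc k C C C (lTensor C (mulRight k c) u ⊗ₜ d) =
      mulMiddle k C (u ⊗ₜ (c ⊗ₜ d)) := by
  induction u using TensorProduct.induction_on with
  | zero => simp
  | tmul => simp
  | add u v hu hv => simp only [map_add, add_tmul, hu, hv]

theorem assoc_rTensor_mulLeft_tmul (c : C) (w : C ⊗[k] C) (d : C) :
    TensorProduct.assoc k C C C (rTensor C (mulLeft k c) w ⊗ₜ d) =
      rTensor (C ⊗[k] C) (mulLeft k c) (TensorProduct.assoc k C C C (w ⊗ₜ d)) := by
  induction w using TensorProduct.induction_on with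
  | zero => simp
  | tmul => simp
  | add u v hu hv => simp only [map_add, add_tmul, hu, hv]

variable {lam : k} {Δ : C →ₗ[k] C ⊗[k] C}

theorem assoc_rTensor_rTensor_mulLeft_map {s : C} {g : N →ₗ[k] C}
    (hleib : ∀ n, LeibnizAt lam Δ s (g n)) (y : N ⊗[k] N) :
    TensorProduct.assoc k C C C (rTensor C Δ (rTensor C (mulLeft k s) (map g g y))) =
      rTensor (C ⊗[k] C) (mulLeft k s) (TensorProduct.assoc k C C C (rTensor C Δ (map g g y))) +
        mulMiddle k C (Δ s ⊗ₜ map g g y) + lam • s ⊗ₜ map g g y := by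
  induction y using TensorProduct.induction_on with
  | zero => simp
  | tmul n₁ n₂ =>
    simp only [map_tmul, rTensor_tmul, mulLeft_apply]
    rw [hleib, add_tmul, add_tmul, map_add, map_add, assoc_rTensor_mulLeft_tmul,
      assoc_lTensor_mulRight_tmul, ← smul_tmul', map_smul, assoc_tmul]
  | add u v hu hv => simp only [map_add, tmul_add, hu, hv, smul_add]; abel

theorem lTensor_lTensor_mulRight_map {t : C} {f : M →ₗ[k] C}
    (hleib : ∀ m, LeibnizAt lam Δ (f m) t) (x : M ⊗[k] M) :
    lTensor C Δ (lTensor C (mulRight k t) (map f f x)) =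
      lTensor C (lTensor C (mulRight k t)) (lTensor C Δ (map f f x)) +
        mulMiddle k C (map f f x ⊗ₜ Δ t) +
          lam • TensorProduct.assoc k C C C (map f f x ⊗ₜ t) := by
  induction x using TensorProduct.induction_on with
  | zero => simp
  | tmul m₁ m₂ =>
    simp only [map_tmul, lTensor_tmul, mulRight_apply]
    rw [hleib, tmul_add, tmul_add, tmul_rTensor_mulLeft, tmul_smul, assoc_tmul]
    abel
  | add u v hu hv => simp only [map_add, add_tmul, hu, hv, smul_add]; abel

theorem IsCoassocAt.mul_of_leibnizAt {f : M →ₗ[k] C} {g : N →ₗ[k] C} {x : M ⊗[k] M}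
    {y : N ⊗[k] N} {s t : C} (hs : IsCoassocAt Δ s) (ht : IsCoassocAt Δ t)
    (hΔs : Δ s = TensorProduct.map f f x) (hΔt : Δ t = TensorProduct.map g g y)
    (hleib_s : ∀ n, LeibnizAt lam Δ s (g n)) (hleib_t : ∀ m, LeibnizAt lam Δ (f m) t)
    (hst : LeibnizAt lam Δ s t) : IsCoassocAt Δ (s * t) := by
  unfold IsCoassocAt at *
  rw [hst]
  simp only [map_add, map_smul, rTensor_tmul, lTensor_tmul]
  rw [assoc_rTensor_lTensor, hs, lTensor_rTensor_comm, ← ht, hΔs, hΔt,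
    assoc_rTensor_rTensor_mulLeft_map hleib_s, lTensor_lTensor_mulRight_map hleib_t, ← hΔs, ← hΔt]
  abel

end Leibniz

section TensorProductAlgebra

variable {k A B : Type*} [CommRing k] [Ring A] [Algebra k A] [Ring B] [Algebra k B]

theorem mulRight_comp_mk_flip_one (b : B) :
    mulRight k ((1 : A) ⊗ₜ[k] b) ∘ₗ (TensorProduct.mk k A B).flip 1 =
      (TensorProduct.mk k A B).flip b := by
  ext a
  simp

theorem mulLeft_comp_mk_one (a : A) :
    mulLeft k (a ⊗ₜ[k] (1 : B)) ∘ₗ TensorProduct.mk k A B 1 = TensorProduct.mk k A B a := by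
  ext b
  simp

end TensorProductAlgebra

/-- For infinitesimal unitary bialgebras `A`, `B` of weight `λ`, the coproduct `Δ` on `A ⊗ B`
given by `Δ(a ⊗ b) = Σ (a₁ ⊗ 1) ⊗ (a₂ ⊗ b) + Σ (a ⊗ b₁) ⊗ (1 ⊗ b₂) + λ (a ⊗ 1) ⊗ (1 ⊗ b)`
is coassociative. -/
theorem tensor_coproduct_coassoc
    {k A B : Type*} [CommRing k] [Ring A] [Algebra k A] [Ring B] [Algebra k B] (lam : k)
    (ΔA : A →ₗ[k] A ⊗[k] A) (ΔB : B →ₗ[k] B ⊗[k] B)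
    (hAcoassoc : ∀ a : A,
      (TensorProduct.assoc k A A A) (LinearMap.rTensor A ΔA (ΔA a)) =
        LinearMap.lTensor A ΔA (ΔA a))
    (hAcompat : ∀ a a' : A,
      ΔA (a * a') =
        LinearMap.rTensor A (LinearMap.mulLeft k a) (ΔA a') +
        LinearMap.lTensor A (LinearMap.mulRight k a') (ΔA a) +
        lam • (a ⊗ₜ[k] a'))
    (hBcoassoc : ∀ b : B,
      (TensorProduct.assoc k B B B) (LinearMap.rTensor B ΔB (ΔB b)) =
        LinearMap.lTensor B ΔB (ΔB b))
    (hBcompat : ∀ b b' : B,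
      ΔB (b * b') =
        LinearMap.rTensor B (LinearMap.mulLeft k b) (ΔB b') +
        LinearMap.lTensor B (LinearMap.mulRight k b') (ΔB b) +
        lam • (b ⊗ₜ[k] b'))
    (Δ : A ⊗[k] B →ₗ[k] (A ⊗[k] B) ⊗[k] (A ⊗[k] B))
    (hΔ : ∀ (a : A) (b : B),
      Δ (a ⊗ₜ[k] b) =
        TensorProduct.map ((TensorProduct.mk k A B).flip 1)
          ((TensorProduct.mk k A B).flip b) (ΔA a) +
        TensorProduct.map (TensorProduct.mk k A B a) (TensorProduct.mk k A B 1) (ΔB b) +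
        lam • ((a ⊗ₜ[k] (1 : B)) ⊗ₜ[k] ((1 : A) ⊗ₜ[k] b))) :
    ∀ z : A ⊗[k] B,
      (TensorProduct.assoc k (A ⊗[k] B) (A ⊗[k] B) (A ⊗[k] B))
          (LinearMap.rTensor (A ⊗[k] B) Δ (Δ z)) =
        LinearMap.lTensor (A ⊗[k] B) Δ (Δ z) := by
  have hΔA_one := LeibnizAt.apply_one (hAcompat 1 1)
  have hΔB_one := LeibnizAt.apply_one (hBcompat 1 1)
  have hιA : ∀ a, Δ (a ⊗ₜ[k] (1 : B)) =
      TensorProduct.map ((TensorProduct.mk k A B).flip 1) ((TensorProduct.mk k A B).flip 1) (ΔA a) :=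
    fun a => by simp [hΔ, hΔB_one]
  have hιB : ∀ b, Δ ((1 : A) ⊗ₜ[k] b) =
      TensorProduct.map (TensorProduct.mk k A B 1) (TensorProduct.mk k A B 1) (ΔB b) :=
    fun b => by simp [hΔ, hΔA_one]
  have hleib : ∀ a b, LeibnizAt lam Δ (a ⊗ₜ[k] (1 : B)) ((1 : A) ⊗ₜ[k] b) := fun a b => by
    rw [LeibnizAt, hιA, hιB, lTensor_map, rTensor_map, mulRight_comp_mk_flip_one,
      mulLeft_comp_mk_one, Algebra.TensorProduct.tmul_mul_tmul, mul_one, one_mul, hΔ]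
    abel
  have hA : ∀ a, IsCoassocAt Δ (a ⊗ₜ[k] (1 : B)) := fun a =>
    IsCoassocAt.map (f := (TensorProduct.mk k A B).flip 1) hιA (hAcoassoc a)
  have hB : ∀ b, IsCoassocAt Δ ((1 : A) ⊗ₜ[k] b) := fun b =>
    IsCoassocAt.map (f := TensorProduct.mk k A B 1) hιB (hBcoassoc b)
  have hcoassoc : ∀ a b, IsCoassocAt Δ (a ⊗ₜ[k] b) := fun a b => by
    simpa only [Algebra.TensorProduct.tmul_mul_tmul, mul_one, one_mul] using
      IsCoassocAt.mul_of_leibnizAt (f := (TensorProduct.mk k A B).flip 1)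
        (g := TensorProduct.mk k A B 1) (hA a) (hB b) (hιA a) (hιB b)
        (hleib a) (hleib · b) (hleib a b)
  intro z
  induction z using TensorProduct.induction_on with
  | zero => simp
  | tmul a b => exact hcoassoc a b
  | add x y hx hy => simp only [map_add, hx, hy]
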